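/- arXiv:0907.0896 — 2 statements merged into one kernel-verified Lean document; each statement's English description precedes it below -/
import Mathlib

section
/- The universal critical variety Σ(A) = {(x, λ) ∈ M × C^n : ω_λ(x) = 0} is a smooth complex submanifold of M × C^n of codimension ℓ; in fact, the projection π_1 : Σ(A) → M onto the first factor is a trivial vector bundle of rank n - ℓ, with Σ(A) ≅ M × W where W = {λ ∈ C^n : Σ_{i=1}^n λ_i f_i = 0}. -/
/-!
On the complement `M` every `f_i(x)` is a nonzero scalar, so rescaling `λ_i ↦ λ_i f_i(x)` is a
linear automorphism of `ℂⁿ` depending continuously on `x`, with continuous inverse. It carries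
the fibre `W` onto the fibre of `Σ(A)` over `x`, because `ω_μ(x) = ∑ μ_i/f_i(x) · df_i` vanishes
exactly when `(μ_i/f_i(x))_i` is a linear relation among the `f_i`. Essentiality says the `f_i`
span the dual space, so rank-nullity gives `dim W = n - ℓ`.
-/

open Module Matrix

theorem Fintype.mem_ker_linearCombination_pi_iff {R ι κ : Type*} [CommSemiring R] [Fintype ι]
    (c : ι → κ → R) (v : ι → R) :
    v ∈ LinearMap.ker (Fintype.linearCombination R c) ↔ ∀ j, ∑ i, v i * c i j = 0 := by
  simp [Fintype.linearCombination_apply, funext_iff, Finset.sum_apply]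

theorem Fintype.finrank_ker_linearCombination_of_span_eq_top {K V ι : Type*} [Field K]
    [AddCommGroup V] [Module K V] [Fintype ι] (v : ι → V)
    (hv : Submodule.span K (Set.range v) = ⊤) :
    finrank K (LinearMap.ker (Fintype.linearCombination K v)) = Fintype.card ι - finrank K V := by
  have h := (Fintype.linearCombination K v).finrank_range_add_finrank_ker
  rw [Fintype.range_linearCombination, hv, finrank_top, finrank_fintype_fun_eq_card] at h
  omega

section Rescale

variable {X G₀ ι : Type*} [TopologicalSpace X] [GroupWithZero G₀] [TopologicalSpace G₀]
  [ContinuousInv₀ G₀] [ContinuousMul G₀]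

def Homeomorph.prodRescale (u : X → ι → G₀) (hu : Continuous u) (S : Set (ι → G₀)) :
    {x | ∀ i, u x i ≠ 0} × S ≃ₜ {p : X × (ι → G₀) | (∀ i, u p.1 i ≠ 0) ∧ p.2 / u p.1 ∈ S} where
  toFun q := ⟨(q.1, q.2 * u q.1), q.1.2, by
    convert q.2.2 using 1
    funext i
    exact mul_div_cancel_right₀ _ (q.1.2 i)⟩
  invFun p := (⟨p.1.1, p.2.1⟩, ⟨p.1.2 / u p.1.1, p.2.2⟩)
  left_inv q := by
    ext i
    · rfl
    · exact mul_div_cancel_right₀ _ (q.1.2 i)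
  right_inv p := by
    ext i
    · rfl
    · exact div_mul_cancel₀ _ (p.2.1 i)
  continuous_toFun := by
    refine .subtype_mk (.prodMk (continuous_subtype_val.comp continuous_fst) ?_) _
    exact (continuous_subtype_val.comp continuous_snd).mul
      (hu.comp (continuous_subtype_val.comp continuous_fst))
  continuous_invFun := by
    have hp : Continuous fun p : {p : X × (ι → G₀) | (∀ i, u p.1 i ≠ 0) ∧ p.2 / u p.1 ∈ S} =>
        (p : X × (ι → G₀)) := continuous_subtype_val
    refine .prodMk (.subtype_mk (continuous_fst.comp hp) _) (.subtype_mk ?_ _)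
    exact continuous_pi fun i => ((continuous_apply i).comp (continuous_snd.comp hp)).div
      ((continuous_apply i).comp (hu.comp (continuous_fst.comp hp))) fun p => p.2.1 i

end Rescale

theorem universal_critical_set_is_trivial_bundle
    (ℓ n : ℕ) (c : Fin n → Fin ℓ → ℂ)
    (hess : Submodule.span ℂ (Set.range c) = ⊤)
    (M : Set (Fin ℓ → ℂ)) (hM : M = {x | ∀ i, (∑ j, c i j * x j) ≠ 0})
    (W : Submodule ℂ (Fin n → ℂ)) (hW : W = LinearMap.ker (Fintype.linearCombination ℂ c))
    (Sig : Set ((Fin ℓ → ℂ) × (Fin n → ℂ)))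
    (hSig : Sig = {p | (∀ i, (∑ j, c i j * p.1 j) ≠ 0) ∧
      ∀ j, (∑ i, p.2 i * c i j / (∑ j', c i j' * p.1 j')) = 0}) :
    Module.finrank ℂ W = n - ℓ ∧
    ∃ h : (M × W) ≃ₜ Sig,
      ∀ q : M × W,
        (↑(h q) : (Fin ℓ → ℂ) × (Fin n → ℂ)).1 = (q.1 : Fin ℓ → ℂ) ∧
        ∀ i, (↑(h q) : (Fin ℓ → ℂ) × (Fin n → ℂ)).2 i =
          (q.2 : Fin n → ℂ) i * ∑ j, c i j * (q.1 : Fin ℓ → ℂ) j := by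
  subst hM hW
  refine ⟨by simpa using Fintype.finrank_ker_linearCombination_of_span_eq_top c hess, ?_⟩
  have hSig_eq : {p : (Fin ℓ → ℂ) × (Fin n → ℂ) | (∀ i, (c *ᵥ p.1) i ≠ 0) ∧
      p.2 / (c *ᵥ p.1) ∈ LinearMap.ker (Fintype.linearCombination ℂ c)} = Sig := by
    simp only [hSig, Fintype.mem_ker_linearCombination_pi_iff, Pi.div_apply, div_mul_eq_mul_div]
    rfl
  exact ⟨(Homeomorph.prodRescale (c *ᵥ ·) (continuous_const.matrix_mulVec continuous_id) _).trans
    (Homeomorph.setCongr hSig_eq), fun q => ⟨rfl, fun i => rfl⟩⟩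
end

section
/- For any central arrangement A, the ideal quotient (I' : Q) equals the logarithmic ideal I(A), where I' = (Q d_1, ..., Q d_ℓ) is the ideal of S obtained by clearing denominators in the universal critical equations. -/
/-!
If `g Q = ∑_j θ_j Q d_j`, then `g Q = ∑_i a_i (Q/f_i) θ(f_i)`. Every term but the `i`-th lies in
the prime ideal `(f_i)`, while `a_i` and `Q/f_i` do not, so `f_i ∣ θ(f_i)` for all `i`: `θ` is
logarithmic and `g = ⟨θ, ω_a⟩`. Conversely `Q ⟨θ, ω_a⟩ = ∑_j θ_j Q d_j` for every `θ`.
-/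

open MvPolynomial Finset

/-- The `i`-th defining linear form, in `S = ℂ[a_1,…,a_n,x_1,…,x_ℓ]`
(variables `Sum.inl i = a_i`, `Sum.inr j = x_j`). -/
noncomputable def fS {ℓ n : ℕ} (c : Fin n → Fin ℓ → ℂ) (i : Fin n) :
    MvPolynomial (Fin n ⊕ Fin ℓ) ℂ :=
  ∑ j, C (c i j) * X (Sum.inr j)

/-- The defining polynomial `Q = f_1 ⋯ f_n` of the arrangement, in `S`. -/
noncomputable def QS {ℓ n : ℕ} (c : Fin n → Fin ℓ → ℂ) : MvPolynomial (Fin n ⊕ Fin ℓ) ℂ :=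
  ∏ i, fS c i

/-- `Q/f_i`. -/
noncomputable def Qdiv {ℓ n : ℕ} (c : Fin n → Fin ℓ → ℂ) (i : Fin n) :
    MvPolynomial (Fin n ⊕ Fin ℓ) ℂ :=
  ∏ k ∈ univ.erase i, fS c k

/-- `Q·d_j = ∑_i a_i c_{ij} Q/f_i`, the numerator of the `j`-th coordinate of the
universal 1-form `ω_a = ∑_i a_i df_i/f_i`. -/
noncomputable def Qd {ℓ n : ℕ} (c : Fin n → Fin ℓ → ℂ) (j : Fin ℓ) :
    MvPolynomial (Fin n ⊕ Fin ℓ) ℂ :=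
  ∑ i, X (Sum.inl i) * C (c i j) * Qdiv c i

/-- `θ = ∑_j θ_j ∂/∂x_j` (coefficients in `S`) is a logarithmic derivation: `θ(Q) ∈ (Q)`. -/
def IsLogDer {ℓ n : ℕ} (c : Fin n → Fin ℓ → ℂ)
    (θ : Fin ℓ → MvPolynomial (Fin n ⊕ Fin ℓ) ℂ) : Prop :=
  (∑ j, θ j * pderiv (Sum.inr j) (QS c)) ∈ Ideal.span {QS c}

/-- `g = ⟨θ, ω_a⟩`, i.e. `Q·g = ∑_i a_i (Q/f_i) θ(f_i)`. -/
def PairsWith {ℓ n : ℕ} (c : Fin n → Fin ℓ → ℂ)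
    (θ : Fin ℓ → MvPolynomial (Fin n ⊕ Fin ℓ) ℂ)
    (g : MvPolynomial (Fin n ⊕ Fin ℓ) ℂ) : Prop :=
  QS c * g = ∑ i, X (Sum.inl i) * Qdiv c i * (∑ j, θ j * pderiv (Sum.inr j) (fS c i))

/-- The logarithmic ideal `I(A) = (⟨θ, ω_a⟩ : θ ∈ Der(A))  ⊆ S`. -/
noncomputable def Ilog {ℓ n : ℕ} (c : Fin n → Fin ℓ → ℂ) :
    Ideal (MvPolynomial (Fin n ⊕ Fin ℓ) ℂ) :=
  Ideal.span {g | ∃ θ, IsLogDer c θ ∧ PairsWith c θ g}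

/-- The grading of `S` by degree in the `x`-variables. -/
noncomputable def xwt {ℓ n : ℕ} : (Fin n ⊕ Fin ℓ) → ℕ :=
  Sum.elim (fun _ => 0) (fun _ => 1)

theorem Derivation.leibniz_finset_prod {R A M ι : Type*} [CommSemiring R] [CommSemiring A]
    [Algebra R A] [AddCommMonoid M] [Module A M] [Module R M] [IsScalarTower R A M]
    [DecidableEq ι] (D : Derivation R A M) (s : Finset ι) (f : ι → A) :
    D (∏ i ∈ s, f i) = ∑ i ∈ s, (∏ k ∈ s.erase i, f k) • D (f i) := by
  induction s using Finset.induction_on with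
  | empty => simp
  | @insert a s ha ih =>
    rw [prod_insert ha, D.leibniz, ih, sum_insert ha, erase_insert ha, smul_sum, add_comm]
    congr 1
    refine sum_congr rfl fun i hi => ?_
    rw [erase_insert_of_ne (ne_of_mem_of_not_mem hi ha).symm,
      prod_insert (fun h => ha (mem_of_mem_erase h)), mul_smul]

theorem Derivation.prod_dvd_of_forall_dvd {R A ι : Type*} [CommSemiring R] [CommSemiring A]
    [Algebra R A] (D : Derivation R A A) {s : Finset ι} {f : ι → A}
    (h : ∀ i ∈ s, f i ∣ D (f i)) : ∏ i ∈ s, f i ∣ D (∏ i ∈ s, f i) := by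
  classical
  rw [D.leibniz_finset_prod]
  refine dvd_sum fun i hi => ?_
  obtain ⟨q, hq⟩ := h i hi
  rw [hq, smul_eq_mul, ← mul_assoc, prod_erase_mul _ _ hi]
  exact dvd_mul_right _ _

section Arrangement

variable {ℓ n : ℕ}

local notation "S" => MvPolynomial (Fin n ⊕ Fin ℓ) ℂ

noncomputable def xDerivation (θ : Fin ℓ → S) : Derivation ℂ S S :=
  ∑ j, θ j • pderiv (Sum.inr j)

theorem xDerivation_apply (θ : Fin ℓ → S) (p : S) :
    xDerivation θ p = ∑ j, θ j * pderiv (Sum.inr j) p := by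
  rw [xDerivation, ← Derivation.coeFnAddMonoidHom_apply, map_sum, Finset.sum_apply]
  simp

variable (c : Fin n → Fin ℓ → ℂ)

theorem pderiv_inr_fS (i : Fin n) (j : Fin ℓ) : pderiv (Sum.inr j) (fS c i) = C (c i j) := by
  classical
  simp [fS, pderiv_X, Pi.single_apply]

theorem xDerivation_fS (θ : Fin ℓ → S) (i : Fin n) :
    xDerivation θ (fS c i) = ∑ j, θ j * C (c i j) := by
  simp only [xDerivation_apply, pderiv_inr_fS]

theorem fS_eq_zero_iff {i : Fin n} : fS c i = 0 ↔ c i = 0 := by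
  refine ⟨fun h0 => funext fun j => C_injective (Fin n ⊕ Fin ℓ) ℂ ?_, fun h0 => by simp [fS, h0]⟩
  rw [← pderiv_inr_fS, h0, map_zero, Pi.zero_apply, C_0]

theorem totalDegree_fS {i : Fin n} (hi : c i ≠ 0) : (fS c i).totalDegree = 1 :=
  (IsHomogeneous.sum _ _ 1 fun _ _ => isHomogeneous_C_mul_X _ _).totalDegree
    ((fS_eq_zero_iff c).not.mpr hi)

theorem prime_fS {i : Fin n} (hi : c i ≠ 0) : Prime (fS c i) := by
  obtain ⟨m, hm⟩ := ne_zero_iff.mp ((fS_eq_zero_iff c).not.mpr hi)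
  refine (irreducible_of_totalDegree_eq_one (totalDegree_fS c hi) fun x hx => ?_).prime
  exact (ne_zero_of_dvd_ne_zero hm (hx m)).isUnit

/-- Setting all `x_j` to zero kills every `f_i` but no `a_k`. -/
theorem fS_not_dvd_X_inl (i k : Fin n) : ¬ fS c i ∣ X (Sum.inl k) := by
  intro h
  have := map_dvd (aeval (Sum.elim (X ∘ Sum.inl) 0 : Fin n ⊕ Fin ℓ → S)) h
  simp [fS] at this

theorem fS_not_dvd_fS {i k : Fin n} (hne : ∀ t : ℂ, c k ≠ t • c i) : ¬ fS c i ∣ fS c k := by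
  rintro ⟨q, hq⟩
  have hk : fS c k ≠ 0 := (fS_eq_zero_iff c).not.mpr (by simpa using hne 0)
  have hi : fS c i ≠ 0 := left_ne_zero_of_mul (hq ▸ hk)
  have hq0 : q ≠ 0 := right_ne_zero_of_mul (hq ▸ hk)
  have hdeg := totalDegree_mul_of_isDomain hi hq0
  rw [← hq, totalDegree_fS c ((fS_eq_zero_iff c).not.mp hk),
    totalDegree_fS c ((fS_eq_zero_iff c).not.mp hi), left_eq_add,
    totalDegree_eq_zero_iff_eq_C] at hdeg
  refine hne (coeff 0 q) (funext fun j => C_injective (Fin n ⊕ Fin ℓ) ℂ ?_)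
  have := congrArg (pderiv (Sum.inr j)) hq
  rw [hdeg, mul_comm, pderiv_C_mul, pderiv_inr_fS, pderiv_inr_fS, ← C_mul] at this
  simpa using this

theorem fS_mul_Qdiv (i : Fin n) : fS c i * Qdiv c i = QS c :=
  mul_prod_erase _ _ (mem_univ i)

theorem fS_dvd_Qdiv {i k : Fin n} (hik : i ≠ k) : fS c i ∣ Qdiv c k :=
  dvd_prod_of_mem _ (mem_erase.mpr ⟨hik, mem_univ i⟩)

theorem fS_dvd_of_QS_dvd_sum {i : Fin n} (hi : c i ≠ 0)
    (hne : ∀ k, k ≠ i → ∀ t : ℂ, c k ≠ t • c i)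
    {T : Fin n → S} (h : QS c ∣ ∑ k, X (Sum.inl k) * Qdiv c k * T k) : fS c i ∣ T i := by
  have hp := prime_fS c hi
  have hterm : fS c i ∣ X (Sum.inl i) * Qdiv c i * T i := by
    rw [← add_sum_erase _ _ (mem_univ i)] at h
    have hQ : fS c i ∣ QS c := fS_mul_Qdiv c i ▸ dvd_mul_right _ _
    refine (dvd_add_left (dvd_sum fun k hk => ?_)).mp (hQ.trans h)
    exact ((fS_dvd_Qdiv c (ne_of_mem_erase hk).symm).mul_left _).mul_right _
  refine (hp.dvd_or_dvd hterm).resolve_left fun hXQ => ?_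
  rcases hp.dvd_or_dvd hXQ with hX | hQ
  · exact fS_not_dvd_X_inl c i i hX
  · obtain ⟨k, hk, hdvd⟩ := (hp.dvd_finsetProd_iff _).mp hQ
    exact fS_not_dvd_fS c (hne k (ne_of_mem_erase hk)) hdvd

theorem sum_mul_Qd (θ : Fin ℓ → S) :
    ∑ j, θ j * Qd c j = ∑ i, X (Sum.inl i) * Qdiv c i * xDerivation θ (fS c i) := by
  simp only [Qd, xDerivation_fS, mul_sum]
  rw [sum_comm]
  exact sum_congr rfl fun i _ => sum_congr rfl fun j _ => by ring

theorem pairsWith_iff {θ : Fin ℓ → S} {g : S} : PairsWith c θ g ↔ QS c * g = ∑ j, θ j * Qd c j := by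
  simp only [PairsWith, sum_mul_Qd, xDerivation_apply]

theorem isLogDer_of_forall_dvd {θ : Fin ℓ → S} (h : ∀ i, fS c i ∣ xDerivation θ (fS c i)) :
    IsLogDer c θ := by
  rw [IsLogDer, Ideal.mem_span_singleton, ← xDerivation_apply, QS]
  exact (xDerivation θ).prod_dvd_of_forall_dvd fun i _ => h i

theorem Ilog_le_colon : Ilog c ≤ (Ideal.span (Set.range (Qd c))).colon (Ideal.span {QS c}) := by
  rw [Ilog, Ideal.span_le]
  rintro g ⟨θ, -, hpair⟩
  rw [SetLike.mem_coe, Ideal.mem_colon_span_singleton, mul_comm, (pairsWith_iff c).mp hpair]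
  exact Ideal.sum_mem _ fun j _ => Ideal.mul_mem_left _ _ (Ideal.subset_span ⟨j, rfl⟩)

end Arrangement

theorem naive_ideal_colon_Q_eq_logarithmic_ideal
    (ℓ n : ℕ) (c : Fin n → Fin ℓ → ℂ)
    (hnz : ∀ i, c i ≠ 0)
    (hprop : ∀ i k, i ≠ k → ∀ t : ℂ, c i ≠ t • c k) :
    ∀ g : MvPolynomial (Fin n ⊕ Fin ℓ) ℂ,
      g * QS c ∈ Ideal.span (Set.range (Qd c)) ↔ g ∈ Ilog c := by
  intro g
  refine ⟨fun h => ?_, fun hg => Ideal.mem_colon_span_singleton.mp (Ilog_le_colon c hg)⟩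
  obtain ⟨θ, hθ⟩ := (Submodule.mem_span_range_iff_exists_fun _).mp h
  simp only [smul_eq_mul] at hθ
  have hpair : PairsWith c θ g := by rw [pairsWith_iff, hθ, mul_comm]
  have hdvd : ∀ i, fS c i ∣ xDerivation θ (fS c i) := fun i =>
    fS_dvd_of_QS_dvd_sum c (hnz i) (fun k hk => hprop k i hk)
      ⟨g, by rw [← sum_mul_Qd, hθ, mul_comm]⟩
  exact Ideal.subset_span ⟨θ, isLogDer_of_forall_dvd c hdvd, hpair⟩
end
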